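/- Let n be a nonzero integer and let ν ∈ ℂ satisfy P_n(ν) = 0. Then: (a) the vector α := (Rρ̄, −R(ū−ν), (λ₀in+ū−ν)(ū−ν) − Rθ̄) satisfies R_n·α = ν·α; (b) since ν ≠ ū, the vector β := (−Rρ̄/(ū−ν), R, (Rθ̄ − (λ₀in+ū−ν)(ū−ν))/(ū−ν)) is well defined and satisfies R_n·β = ν·β; (c) the vector γ := ((λ₀in+ū−ν)(κ₀in+ū−ν) − R²θ̄/c₀, −(Rθ̄/ρ̄)(κ₀in+ū−ν), R²θ̄²/(ρ̄c₀)) satisfies R_n·γ = ν·γ. In particular every root ν of P_n is an eigenvalue of R_n with the displayed eigenvectors. -/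

import Mathlib

open Complex

/-- The characteristic cubic `P_n` of the matrix `R_n` arising from the non-barotropic
linearized compressible Navier–Stokes system. -/
noncomputable def Pcubic (lam kap u ρ θ R c : ℝ) (n : ℤ) (ν : ℂ) : ℂ :=
  ν ^ 3 - (((lam : ℂ) + (kap : ℂ)) * Complex.I * (n : ℂ) + 3 * (u : ℂ)) * ν ^ 2
    - ((lam : ℂ) * (kap : ℂ) * (n : ℂ) ^ 2
        - 2 * ((lam : ℂ) + (kap : ℂ)) * (u : ℂ) * Complex.I * (n : ℂ)
        - 3 * (u : ℂ) ^ 2 + (R : ℂ) ^ 2 * (θ : ℂ) / (c : ℂ) + (R : ℂ) * (θ : ℂ)) * ν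
    + (lam : ℂ) * (kap : ℂ) * (u : ℂ) * (n : ℂ) ^ 2
    - ((lam : ℂ) + (kap : ℂ)) * (u : ℂ) ^ 2 * Complex.I * (n : ℂ)
    - (u : ℂ) ^ 3 + (R : ℂ) ^ 2 * (θ : ℂ) / (c : ℂ) * (u : ℂ)
    + (R : ℂ) * (θ : ℂ) * (kap : ℂ) * Complex.I * (n : ℂ) + (R : ℂ) * (θ : ℂ) * (u : ℂ)

/-- The matrix `R_n` of the non-barotropic linearized system, with rows
`(ū, ρ̄, 0)`, `(Rθ̄/ρ̄, λ₀in + ū, R)`, `(0, Rθ̄/c₀, κ₀in + ū)`. -/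
noncomputable def Rmat3 (lam kap u ρ θ R c : ℝ) (n : ℤ) : Matrix (Fin 3) (Fin 3) ℂ :=
  !![(u : ℂ), (ρ : ℂ), 0;
     ((R * θ / ρ : ℝ) : ℂ), (lam : ℂ) * Complex.I * (n : ℂ) + (u : ℂ), (R : ℂ);
     0, ((R * θ / c : ℝ) : ℂ), (kap : ℂ) * Complex.I * (n : ℂ) + (u : ℂ)]

/-!
`P_n(ν)` is `det (ν - R_n)`. For any square matrix `A`, `(ν - A) * adj (ν - A) = det (ν - A) • 1`,
so when `ν` is a root of the characteristic polynomial every column of `adj (ν - A)` is an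
eigenvector of `A` for `ν` (or zero). For `R_n`, which is tridiagonal, `α` and `γ` are the
third and first columns of `adj (ν - R_n)`, and `β = -(ū - ν)⁻¹ • α`. Finally `ν ≠ ū` because
`P_n(ū) = R θ̄ κ₀ i n ≠ 0`.
-/

open Matrix

theorem Matrix.mulVec_col_adjugate_of_det_eq_zero {ι R : Type*} [Fintype ι] [DecidableEq ι]
    [CommRing R] {A : Matrix ι ι R} {ν : R} (h : (scalar ι ν - A).det = 0) (j : ι) :
    A *ᵥ (scalar ι ν - A).adjugate.col j = ν • (scalar ι ν - A).adjugate.col j := by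
  have hmul : A * (scalar ι ν - A).adjugate = ν • (scalar ι ν - A).adjugate := by
    have := mul_adjugate (scalar ι ν - A)
    rw [h, zero_smul, sub_mul, sub_eq_zero, scalar_apply, ← smul_eq_diagonal_mul] at this
    exact this.symm
  rw [← mulVec_single_one, mulVec_mulVec, hmul, smul_mulVec, mulVec_single_one]

section
variable {lam kap u ρ θ R c : ℝ} {n : ℤ} {ν : ℂ}

theorem scalar_sub_Rmat3 :
    scalar (Fin 3) ν - Rmat3 lam kap u ρ θ R c n =
      !![ν - u, -ρ, 0;
         -(R * θ / ρ), ν - (lam * I * n + u), -R;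
         0, -(R * θ / c), ν - (kap * I * n + u)] := by
  ext i j
  fin_cases i <;> fin_cases j <;> simp [Rmat3]

theorem Pcubic_eq_det (hρ : ρ ≠ 0) :
    Pcubic lam kap u ρ θ R c n ν = (scalar (Fin 3) ν - Rmat3 lam kap u ρ θ R c n).det := by
  rw [scalar_sub_Rmat3, det_fin_three]
  simp only [Fin.isValue, of_apply, cons_val', cons_val_zero, cons_val_one, cons_val,
    cons_val_fin_one]
  unfold Pcubic
  linear_combination ((u : ℂ) - ν) * lam * kap * n ^ 2 * I_sq
    + (ν - (kap * I * n + u)) * mul_div_cancel₀ ((R : ℂ) * θ) (ofReal_ne_zero.mpr hρ)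

theorem Pcubic_ofReal_self : Pcubic lam kap u ρ θ R c n u = R * θ * kap * I * n := by
  unfold Pcubic
  ring

theorem ne_ofReal_of_Pcubic_eq_zero (hkap : kap ≠ 0) (hθ : θ ≠ 0) (hR : R ≠ 0) (hn : n ≠ 0)
    (hν : Pcubic lam kap u ρ θ R c n ν = 0) : ν ≠ u := by
  rintro rfl
  rw [Pcubic_ofReal_self] at hν
  simp [hkap, hθ, hR, hn, I_ne_zero] at hν

theorem col_two_adjugate_scalar_sub_Rmat3 (hρ : ρ ≠ 0) :
    (scalar (Fin 3) ν - Rmat3 lam kap u ρ θ R c n).adjugate.col 2 =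
      ![(R : ℂ) * (ρ : ℂ), -(R : ℂ) * ((u : ℂ) - ν),
          ((lam : ℂ) * Complex.I * (n : ℂ) + (u : ℂ) - ν) * ((u : ℂ) - ν)
            - (R : ℂ) * (θ : ℂ)] := by
  rw [scalar_sub_Rmat3, adjugate_fin_three_of]
  ext i
  fin_cases i <;>
    simp only [Fin.isValue, Fin.zero_eta, Fin.mk_one, Fin.reduceFinMk, col_apply, of_apply,
      cons_val', cons_val, cons_val_fin_one, cons_val_zero, cons_val_one]
  · ring
  · ring
  · linear_combination -mul_div_cancel₀ ((R : ℂ) * θ) (ofReal_ne_zero.mpr hρ)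

theorem col_zero_adjugate_scalar_sub_Rmat3 :
    (scalar (Fin 3) ν - Rmat3 lam kap u ρ θ R c n).adjugate.col 0 =
      ![((lam : ℂ) * Complex.I * (n : ℂ) + (u : ℂ) - ν)
            * ((kap : ℂ) * Complex.I * (n : ℂ) + (u : ℂ) - ν)
            - (R : ℂ) ^ 2 * (θ : ℂ) / (c : ℂ),
          -((R : ℂ) * (θ : ℂ) / (ρ : ℂ)) * ((kap : ℂ) * Complex.I * (n : ℂ) + (u : ℂ) - ν),
          (R : ℂ) ^ 2 * (θ : ℂ) ^ 2 / ((ρ : ℂ) * (c : ℂ))] := by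
  rw [scalar_sub_Rmat3, adjugate_fin_three_of]
  ext i
  fin_cases i <;>
    simp only [Fin.isValue, Fin.zero_eta, Fin.mk_one, Fin.reduceFinMk, col_apply, of_apply,
      cons_val', cons_val, cons_val_fin_one, cons_val_zero, cons_val_one] <;>
    ring

end

theorem eigenvectors_of_Rmat3_general (lam kap u ρ θ R c : ℝ) (hkap : 0 < kap)
    (hρ : 0 < ρ) (hθ : 0 < θ) (hR : 0 < R)
    (n : ℤ) (hn : n ≠ 0) (ν : ℂ) (hν : Pcubic lam kap u ρ θ R c n ν = 0) :
    ν ≠ (u : ℂ) ∧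
    (Rmat3 lam kap u ρ θ R c n).mulVec
        ![(R : ℂ) * (ρ : ℂ), -(R : ℂ) * ((u : ℂ) - ν),
          ((lam : ℂ) * Complex.I * (n : ℂ) + (u : ℂ) - ν) * ((u : ℂ) - ν)
            - (R : ℂ) * (θ : ℂ)]
      = ν • ![(R : ℂ) * (ρ : ℂ), -(R : ℂ) * ((u : ℂ) - ν),
          ((lam : ℂ) * Complex.I * (n : ℂ) + (u : ℂ) - ν) * ((u : ℂ) - ν)
            - (R : ℂ) * (θ : ℂ)] ∧
    (Rmat3 lam kap u ρ θ R c n).mulVec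
        ![-(R : ℂ) * (ρ : ℂ) / ((u : ℂ) - ν), (R : ℂ),
          ((R : ℂ) * (θ : ℂ)
            - ((lam : ℂ) * Complex.I * (n : ℂ) + (u : ℂ) - ν) * ((u : ℂ) - ν))
            / ((u : ℂ) - ν)]
      = ν • ![-(R : ℂ) * (ρ : ℂ) / ((u : ℂ) - ν), (R : ℂ),
          ((R : ℂ) * (θ : ℂ)
            - ((lam : ℂ) * Complex.I * (n : ℂ) + (u : ℂ) - ν) * ((u : ℂ) - ν))
            / ((u : ℂ) - ν)] ∧
    (Rmat3 lam kap u ρ θ R c n).mulVec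
        ![((lam : ℂ) * Complex.I * (n : ℂ) + (u : ℂ) - ν)
            * ((kap : ℂ) * Complex.I * (n : ℂ) + (u : ℂ) - ν)
            - (R : ℂ) ^ 2 * (θ : ℂ) / (c : ℂ),
          -((R : ℂ) * (θ : ℂ) / (ρ : ℂ)) * ((kap : ℂ) * Complex.I * (n : ℂ) + (u : ℂ) - ν),
          (R : ℂ) ^ 2 * (θ : ℂ) ^ 2 / ((ρ : ℂ) * (c : ℂ))]
      = ν • ![((lam : ℂ) * Complex.I * (n : ℂ) + (u : ℂ) - ν)
            * ((kap : ℂ) * Complex.I * (n : ℂ) + (u : ℂ) - ν)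
            - (R : ℂ) ^ 2 * (θ : ℂ) / (c : ℂ),
          -((R : ℂ) * (θ : ℂ) / (ρ : ℂ)) * ((kap : ℂ) * Complex.I * (n : ℂ) + (u : ℂ) - ν),
          (R : ℂ) ^ 2 * (θ : ℂ) ^ 2 / ((ρ : ℂ) * (c : ℂ))] := by
  have hdet : (scalar (Fin 3) ν - Rmat3 lam kap u ρ θ R c n).det = 0 := by
    rwa [← Pcubic_eq_det hρ.ne']
  have hνu : ν ≠ u := ne_ofReal_of_Pcubic_eq_zero hkap.ne' hθ.ne' hR.ne' hn hν
  have hα := mulVec_col_adjugate_of_det_eq_zero hdet 2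
  rw [col_two_adjugate_scalar_sub_Rmat3 hρ.ne'] at hα
  have hγ := mulVec_col_adjugate_of_det_eq_zero hdet 0
  rw [col_zero_adjugate_scalar_sub_Rmat3] at hγ
  have hβ : ![-(R : ℂ) * (ρ : ℂ) / ((u : ℂ) - ν), (R : ℂ),
        ((R : ℂ) * (θ : ℂ)
          - ((lam : ℂ) * Complex.I * (n : ℂ) + (u : ℂ) - ν) * ((u : ℂ) - ν))
          / ((u : ℂ) - ν)]
      = (-((u : ℂ) - ν)⁻¹) • ![(R : ℂ) * (ρ : ℂ), -(R : ℂ) * ((u : ℂ) - ν),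
        ((lam : ℂ) * Complex.I * (n : ℂ) + (u : ℂ) - ν) * ((u : ℂ) - ν)
          - (R : ℂ) * (θ : ℂ)] := by
    have hsub : (u : ℂ) - ν ≠ 0 := sub_ne_zero.mpr hνu.symm
    ext i
    fin_cases i <;>
      simp only [Fin.isValue, Fin.zero_eta, Fin.mk_one, Fin.reduceFinMk, Pi.smul_apply,
        smul_eq_mul, cons_val, cons_val_zero, cons_val_one]
    · field_simp
    · field_simp
    · field_simp
      ring
  refine ⟨hνu, hα, ?_, hγ⟩
  rw [hβ, mulVec_smul, hα, smul_comm]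

/-- Every root `ν` of `P_n` (for `n ≠ 0`) is an eigenvalue of `R_n`, with the three
displayed eigenvectors `α`, `β`, `γ`; moreover `ν ≠ ū` so `β` is well defined. -/
theorem eigenvectors_of_Rmat3 (lam kap u ρ θ R c : ℝ) (hlam : 0 < lam) (hkap : 0 < kap)
    (hu : 0 < u) (hρ : 0 < ρ) (hθ : 0 < θ) (hR : 0 < R) (hc : 0 < c)
    (n : ℤ) (hn : n ≠ 0) (ν : ℂ) (hν : Pcubic lam kap u ρ θ R c n ν = 0) :
    ν ≠ (u : ℂ) ∧
    (Rmat3 lam kap u ρ θ R c n).mulVec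
        ![(R : ℂ) * (ρ : ℂ), -(R : ℂ) * ((u : ℂ) - ν),
          ((lam : ℂ) * Complex.I * (n : ℂ) + (u : ℂ) - ν) * ((u : ℂ) - ν)
            - (R : ℂ) * (θ : ℂ)]
      = ν • ![(R : ℂ) * (ρ : ℂ), -(R : ℂ) * ((u : ℂ) - ν),
          ((lam : ℂ) * Complex.I * (n : ℂ) + (u : ℂ) - ν) * ((u : ℂ) - ν)
            - (R : ℂ) * (θ : ℂ)] ∧
    (Rmat3 lam kap u ρ θ R c n).mulVec
        ![-(R : ℂ) * (ρ : ℂ) / ((u : ℂ) - ν), (R : ℂ),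
          ((R : ℂ) * (θ : ℂ)
            - ((lam : ℂ) * Complex.I * (n : ℂ) + (u : ℂ) - ν) * ((u : ℂ) - ν))
            / ((u : ℂ) - ν)]
      = ν • ![-(R : ℂ) * (ρ : ℂ) / ((u : ℂ) - ν), (R : ℂ),
          ((R : ℂ) * (θ : ℂ)
            - ((lam : ℂ) * Complex.I * (n : ℂ) + (u : ℂ) - ν) * ((u : ℂ) - ν))
            / ((u : ℂ) - ν)] ∧
    (Rmat3 lam kap u ρ θ R c n).mulVec
        ![((lam : ℂ) * Complex.I * (n : ℂ) + (u : ℂ) - ν)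
            * ((kap : ℂ) * Complex.I * (n : ℂ) + (u : ℂ) - ν)
            - (R : ℂ) ^ 2 * (θ : ℂ) / (c : ℂ),
          -((R : ℂ) * (θ : ℂ) / (ρ : ℂ)) * ((kap : ℂ) * Complex.I * (n : ℂ) + (u : ℂ) - ν),
          (R : ℂ) ^ 2 * (θ : ℂ) ^ 2 / ((ρ : ℂ) * (c : ℂ))]
      = ν • ![((lam : ℂ) * Complex.I * (n : ℂ) + (u : ℂ) - ν)
            * ((kap : ℂ) * Complex.I * (n : ℂ) + (u : ℂ) - ν)
            - (R : ℂ) ^ 2 * (θ : ℂ) / (c : ℂ),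
          -((R : ℂ) * (θ : ℂ) / (ρ : ℂ)) * ((kap : ℂ) * Complex.I * (n : ℂ) + (u : ℂ) - ν),
          (R : ℂ) ^ 2 * (θ : ℂ) ^ 2 / ((ρ : ℂ) * (c : ℂ))] :=
  eigenvectors_of_Rmat3_general lam kap u ρ θ R c hkap hρ hθ hR n hn ν hν
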